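/- arXiv:2211.01574 — 2 statements merged into one kernel-verified Lean document; each statement's English description precedes it below -/
import Mathlib

section
/- Let X₁ ⊆ X₀ and Y₁ ⊆ Y₀ be normed spaces, 0 < α ≤ 1, and let T : X₀ → Y₀ with T(X₁) ⊆ Y₁ satisfy ‖Ta − Tb‖_{Y₀} ≤ M₀‖a − b‖_{X₀}^α for all a, b ∈ X₀ and ‖Ta − Tb‖_{Y₁} ≤ M₁‖a − b‖_{X₁}^α for all a, b ∈ X₁, for constants M₀, M₁ > 0. Let 0 ≤ θ ≤ 1, 1 ≤ p ≤ ∞, λ ∈ ℝ, and assume X₁ is dense in X₀. Then T is an α-Hölderian mapping from (X₀,X₁)_{θ,p;λ} into (Y₀,Y₁)_{θ, p/α; λα}: there is a constant c₀ > 0, depending only on M₀, M₁, α, p, λ, such that ‖Ta − Tb‖_{(Y₀,Y₁)_{θ, p/α; λα}} ≤ c₀ · ‖a − b‖_{(X₀,X₁)_{θ,p;λ}}^α for all a, b ∈ (X₀,X₁)_{θ,p;λ}. -/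
open Set MeasureTheory
open scoped ENNReal

/-- The Peetre K-functional for the couple `(X₀, X₁)` where `X₁` is a subgroup of `X₀`
equipped with its own norm `N1`. -/
noncomputable def Kfun {X : Type*} [NormedAddCommGroup X] (X1 : AddSubgroup X)
    (N1 : X → ℝ) (a : X) (t : ℝ) : ℝ :=
  sInf ((fun a1 => ‖a - a1‖ + t * N1 a1) '' (X1 : Set X))

/-- The quasinorm of the interpolation space with logarithm functor
`(X₀,X₁)_{θ,q;λ}`, i.e. `‖ t ↦ t^{−θ−1/q} (1−log t)^λ K(a,t) ‖_{L^q(0,1)}`,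
with the convention `1/q = 0` for `q = ∞`. -/
noncomputable def interpNorm {X : Type*} [NormedAddCommGroup X] (X1 : AddSubgroup X)
    (N1 : X → ℝ) (θ lam : ℝ) (q : ℝ≥0∞) (a : X) : ℝ≥0∞ :=
  eLpNorm (fun t : ℝ => t ^ (-θ - 1 / q.toReal) * (1 - Real.log t) ^ lam * Kfun X1 N1 a t)
    q (volume.restrict (Ioo (0:ℝ) 1))

/-! Approximating `b` by elements of the dense subgroup `X₁` and splitting
`a - b = (a - b - u₁) + u₁` with `u₁ ∈ X₁`, the two Hölder estimates give
`K(Ta - Tb, s ^ α) ≤ (M₀ + M₁) K(a - b, s) ^ α`. The substitution `t = s ^ α` multiplies the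
measure `dt / t` on `(0, 1)` by `α` and changes the weight `(1 - log t) ^ (λα)` by a factor
between `α ^ (λα)` and `1`. Hence the `L^{p/α}(dt/t)` norm of
`t ^ (-θ) (1 - log t) ^ (λα) K(Ta - Tb, t)` is at most a constant times the `α`-th power of the
`L^p(dt/t)` norm of `s ^ (-θ) (1 - log s) ^ λ K(a - b, s)`. -/

section KFunctional

variable {X : Type*} [NormedAddCommGroup X] {X1 : AddSubgroup X} {N1 : X → ℝ}

lemma bddBelow_Kfun_image (hN1 : ∀ x, 0 ≤ N1 x) (a : X) {t : ℝ} (ht : 0 ≤ t) :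
    BddBelow ((fun a1 => ‖a - a1‖ + t * N1 a1) '' (X1 : Set X)) := by
  refine ⟨0, ?_⟩
  rintro _ ⟨a1, -, rfl⟩
  exact add_nonneg (norm_nonneg _) (mul_nonneg ht (hN1 a1))

lemma Kfun_nonneg (hN1 : ∀ x, 0 ≤ N1 x) (a : X) {t : ℝ} (ht : 0 ≤ t) :
    0 ≤ Kfun X1 N1 a t :=
  Real.sInf_nonneg <| by
    rintro _ ⟨a1, -, rfl⟩
    exact add_nonneg (norm_nonneg _) (mul_nonneg ht (hN1 a1))

lemma Kfun_le_of_mem (hN1 : ∀ x, 0 ≤ N1 x) (a : X) {t : ℝ} (ht : 0 ≤ t) {a1 : X}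
    (ha1 : a1 ∈ X1) : Kfun X1 N1 a t ≤ ‖a - a1‖ + t * N1 a1 :=
  csInf_le (bddBelow_Kfun_image hN1 a ht) ⟨a1, ha1, rfl⟩

lemma Kfun_mem_closure (hN1 : ∀ x, 0 ≤ N1 x) (a : X) {t : ℝ} (ht : 0 ≤ t) :
    Kfun X1 N1 a t ∈ closure ((fun a1 => ‖a - a1‖ + t * N1 a1) '' (X1 : Set X)) :=
  csInf_mem_closure ⟨_, 0, X1.zero_mem, rfl⟩ (bddBelow_Kfun_image hN1 a ht)

end KFunctional

lemma mul_rpow_add_mul_rpow_le {M0 M1 α x y : ℝ} (hM0 : 0 ≤ M0) (hM1 : 0 ≤ M1) (hα : 0 ≤ α)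
    (hx : 0 ≤ x) (hy : 0 ≤ y) : M0 * x ^ α + M1 * y ^ α ≤ (M0 + M1) * (x + y) ^ α := by
  have hxy : x ^ α ≤ (x + y) ^ α := Real.rpow_le_rpow hx (le_add_of_nonneg_right hy) hα
  have hyx : y ^ α ≤ (x + y) ^ α := Real.rpow_le_rpow hy (le_add_of_nonneg_left hx) hα
  nlinarith [mul_le_mul_of_nonneg_left hxy hM0, mul_le_mul_of_nonneg_left hyx hM1]

section HolderMap

variable {X Y : Type*} [NormedAddCommGroup X] [NormedAddCommGroup Y]
  {X1 : AddSubgroup X} {Y1 : AddSubgroup Y} {N1 : X → ℝ} {NY1 : Y → ℝ} {T : X → Y} {M0 M1 α : ℝ}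

lemma Kfun_map_sub_le_of_mem (hNY1 : ∀ y, 0 ≤ NY1 y) (hα : 0 < α)
    (hT1 : ∀ a ∈ X1, T a ∈ Y1) (hT0 : ∀ a b : X, ‖T a - T b‖ ≤ M0 * ‖a - b‖ ^ α)
    (hTH : ∀ a ∈ X1, ∀ b ∈ X1, NY1 (T a - T b) ≤ M1 * N1 (a - b) ^ α)
    (hdense : Dense (X1 : Set X)) (a b : X) {s : ℝ} (hs : 0 ≤ s) {u1 : X} (hu1 : u1 ∈ X1) :
    Kfun Y1 NY1 (T a - T b) (s ^ α) ≤ M0 * ‖a - b - u1‖ ^ α + s ^ α * (M1 * N1 u1 ^ α) := by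
  have hsα : 0 ≤ s ^ α := Real.rpow_nonneg hs α
  suffices h : ∀ c, Kfun Y1 NY1 (T a - T b) (s ^ α) ≤
      M0 * ‖a - (c + u1)‖ ^ α + M0 * ‖c - b‖ ^ α + s ^ α * (M1 * N1 u1 ^ α) by
    simpa [Real.zero_rpow hα.ne', sub_sub] using h b
  refine hdense.induction (fun c hc => ?_)
    (isClosed_le continuous_const (by fun_prop (disch := exact hα.le)))
  have hmem : T (c + u1) - T c ∈ Y1 := Y1.sub_mem (hT1 _ (X1.add_mem hc hu1)) (hT1 c hc)
  have hsplit : T a - T b - (T (c + u1) - T c) = (T a - T (c + u1)) + (T c - T b) := by abel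
  have hY1 : NY1 (T (c + u1) - T c) ≤ M1 * N1 u1 ^ α := by
    simpa using hTH _ (X1.add_mem hc hu1) c hc
  calc Kfun Y1 NY1 (T a - T b) (s ^ α)
      ≤ ‖T a - T b - (T (c + u1) - T c)‖ + s ^ α * NY1 (T (c + u1) - T c) :=
        Kfun_le_of_mem hNY1 _ hsα hmem
    _ ≤ M0 * ‖a - (c + u1)‖ ^ α + M0 * ‖c - b‖ ^ α + s ^ α * (M1 * N1 u1 ^ α) := by
        rw [hsplit]
        gcongr
        exact (norm_add_le _ _).trans (add_le_add (hT0 _ _) (hT0 _ _))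

theorem Kfun_map_sub_le (hN1 : ∀ x, 0 ≤ N1 x) (hNY1 : ∀ y, 0 ≤ NY1 y) (hM0 : 0 ≤ M0)
    (hM1 : 0 ≤ M1) (hα : 0 < α) (hT1 : ∀ a ∈ X1, T a ∈ Y1)
    (hT0 : ∀ a b : X, ‖T a - T b‖ ≤ M0 * ‖a - b‖ ^ α)
    (hTH : ∀ a ∈ X1, ∀ b ∈ X1, NY1 (T a - T b) ≤ M1 * N1 (a - b) ^ α)
    (hdense : Dense (X1 : Set X)) (a b : X) {s : ℝ} (hs : 0 ≤ s) :
    Kfun Y1 NY1 (T a - T b) (s ^ α) ≤ (M0 + M1) * Kfun X1 N1 (a - b) s ^ α := by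
  have hclosed : IsClosed {x : ℝ | Kfun Y1 NY1 (T a - T b) (s ^ α) ≤ (M0 + M1) * x ^ α} :=
    isClosed_le continuous_const (by fun_prop (disch := exact hα.le))
  refine hclosed.closure_subset_iff.2 ?_ (Kfun_mem_closure hN1 (a - b) hs)
  rintro _ ⟨u1, hu1, rfl⟩
  have hu := hN1 u1
  calc Kfun Y1 NY1 (T a - T b) (s ^ α)
      ≤ M0 * ‖a - b - u1‖ ^ α + M1 * (s * N1 u1) ^ α := by
        rw [Real.mul_rpow hs hu, mul_left_comm]
        exact Kfun_map_sub_le_of_mem hNY1 hα hT1 hT0 hTH hdense a b hs hu1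
    _ ≤ (M0 + M1) * (‖a - b - u1‖ + s * N1 u1) ^ α := by
        apply mul_rpow_add_mul_rpow_le hM0 hM1 hα.le <;> positivity

end HolderMap

lemma one_add_mul_rpow_le {α x e : ℝ} (hα0 : 0 < α) (hα1 : α ≤ 1) (hx : 0 ≤ x) :
    (1 + α * x) ^ e ≤ max 1 (α ^ e) * (1 + x) ^ e := by
  have hlow : α * (1 + x) ≤ 1 + α * x := by nlinarith
  have hup : 1 + α * x ≤ 1 + x := by nlinarith
  have hpos : 0 < 1 + α * x := by positivity
  rcases le_total 0 e with he | he
  · calc (1 + α * x) ^ e ≤ (1 + x) ^ e := Real.rpow_le_rpow hpos.le hup he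
      _ ≤ max 1 (α ^ e) * (1 + x) ^ e :=
          le_mul_of_one_le_left (by positivity) (le_max_left _ _)
  · calc (1 + α * x) ^ e ≤ (α * (1 + x)) ^ e := Real.rpow_le_rpow_of_nonpos (by positivity) hlow he
      _ = α ^ e * (1 + x) ^ e := Real.mul_rpow hα0.le (by positivity)
      _ ≤ max 1 (α ^ e) * (1 + x) ^ e := by gcongr; exact le_max_right _ _

lemma logWeight_rpow_le {α θ lam C kx ky s : ℝ} (hα0 : 0 < α) (hα1 : α ≤ 1) (hC : 0 ≤ C)
    (hs0 : 0 < s) (hs1 : s ≤ 1) (hkx : 0 ≤ kx) (hkxy : ky ≤ C * kx ^ α) :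
    (s ^ α) ^ (-θ) * ((1 - Real.log (s ^ α)) ^ (lam * α) * ky)
      ≤ C * max 1 (α ^ (lam * α)) * (s ^ (-θ) * ((1 - Real.log s) ^ lam * kx)) ^ α := by
  have hx : 0 ≤ -Real.log s := neg_nonneg.2 (Real.log_nonpos hs0.le hs1)
  have hlog : (1 - α * Real.log s) ^ (lam * α) ≤
      max 1 (α ^ (lam * α)) * (1 - Real.log s) ^ (lam * α) := by
    simpa [sub_eq_add_neg] using one_add_mul_rpow_le (e := lam * α) hα0 hα1 hx
  have hL : 0 ≤ 1 - Real.log s := by linarith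
  have hLα : 0 ≤ 1 - α * Real.log s := by nlinarith
  rw [Real.log_rpow hs0, Real.mul_rpow (by positivity) (by positivity),
    Real.mul_rpow (by positivity) hkx, ← Real.rpow_mul hs0.le, ← Real.rpow_mul hs0.le,
    ← Real.rpow_mul hL, mul_comm (-θ)]
  calc s ^ (α * -θ) * ((1 - α * Real.log s) ^ (lam * α) * ky)
      ≤ s ^ (α * -θ) * ((1 - α * Real.log s) ^ (lam * α) * (C * kx ^ α)) := by gcongr
    _ ≤ s ^ (α * -θ) * ((max 1 (α ^ (lam * α)) * (1 - Real.log s) ^ (lam * α)) * (C * kx ^ α)) := by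
        gcongr
    _ = C * max 1 (α ^ (lam * α)) * (s ^ (α * -θ) * ((1 - Real.log s) ^ (lam * α) * kx ^ α)) := by
        ring

lemma rpow_mem_Ioo_zero_one {u α : ℝ} (hu : u ∈ Ioo (0:ℝ) 1) (hα : 0 < α) : u ^ α ∈ Ioo (0:ℝ) 1 :=
  ⟨Real.rpow_pos_of_pos hu.1 α, Real.rpow_lt_one hu.1.le hu.2 hα⟩

lemma image_rpow_Ioo_zero_one {α : ℝ} (hα : 0 < α) :
    (fun u : ℝ => u ^ α) '' Ioo 0 1 = Ioo (0:ℝ) 1 := by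
  refine Subset.antisymm ?_ fun t ht =>
    ⟨t ^ α⁻¹, rpow_mem_Ioo_zero_one ht (inv_pos.2 hα), Real.rpow_inv_rpow ht.1.le hα.ne'⟩
  rintro _ ⟨u, hu, rfl⟩
  exact rpow_mem_Ioo_zero_one hu hα

lemma lintegral_Ioo_div_eq_lintegral_comp_rpow {α : ℝ} (hα : 0 < α) (g : ℝ → ℝ≥0∞) :
    ∫⁻ t in Ioo (0:ℝ) 1, g t / ENNReal.ofReal t
      = ENNReal.ofReal α * ∫⁻ u in Ioo 0 1, g (u ^ α) / ENNReal.ofReal u := by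
  have hmono : MonotoneOn (fun u : ℝ => u ^ α) (Ioo 0 1) :=
    fun u hu v _ huv => Real.rpow_le_rpow hu.1.le huv hα.le
  have hderiv : ∀ u ∈ Ioo (0:ℝ) 1,
      HasDerivWithinAt (fun u : ℝ => u ^ α) (α * u ^ (α - 1)) (Ioo 0 1) u :=
    fun u hu => (Real.hasDerivAt_rpow_const (Or.inl hu.1.ne')).hasDerivWithinAt
  conv_lhs => rw [← image_rpow_Ioo_zero_one hα,
    lintegral_image_eq_lintegral_deriv_mul_of_monotoneOn measurableSet_Ioo hderiv hmono]
  rw [← lintegral_const_mul' _ _ ENNReal.ofReal_ne_top]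
  refine setLIntegral_congr_fun measurableSet_Ioo fun u hu => ?_
  have hu0 := hu.1
  have huα : ENNReal.ofReal (u ^ α) ≠ 0 := ENNReal.ofReal_ne_zero_iff.2 (Real.rpow_pos_of_pos hu0 α)
  rw [Real.rpow_sub hu0, Real.rpow_one, ENNReal.ofReal_mul hα.le, ENNReal.ofReal_div_of_pos hu0,
    mul_assoc, mul_comm (_ / _), ← mul_div_assoc, ENNReal.div_mul_cancel huα ENNReal.ofReal_ne_top]

lemma ae_restrict_Ioo_comp_rpow_inv {α : ℝ} (hα : 0 < α) {P : ℝ → Prop}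
    (h : ∀ᵐ u ∂volume.restrict (Ioo (0:ℝ) 1), P u) :
    ∀ᵐ t ∂volume.restrict (Ioo (0:ℝ) 1), P (t ^ α⁻¹) := by
  rw [ae_restrict_iff' measurableSet_Ioo, ae_iff] at h ⊢
  have hnull : volume ((fun u : ℝ => u ^ α) '' {u | ¬(u ∈ Ioo 0 1 → P u)}) = 0 := by
    refine addHaar_image_eq_zero_of_differentiableOn_of_addHaar_eq_zero _ ?_ h
    intro u hu
    push Not at hu
    exact (Real.differentiableAt_rpow_const_of_ne α hu.1.1.ne').differentiableWithinAt
  refine measure_mono_null (fun t ht => ?_) hnull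
  push Not at ht
  exact ⟨t ^ α⁻¹, fun hP => ht.2 (hP (rpow_mem_Ioo_zero_one ht.1 (inv_pos.2 hα))),
    Real.rpow_inv_rpow ht.1.1.le hα.ne'⟩

lemma enorm_rpow_neg_inv_mul_rpow {t r : ℝ} (ht : 0 < t) (hr : 0 < r) (x : ℝ) :
    ‖t ^ (-r⁻¹) * x‖ₑ ^ r = ‖x‖ₑ ^ r / ENNReal.ofReal t := by
  rw [enorm_mul, ENNReal.mul_rpow_of_nonneg _ _ hr.le, Real.enorm_eq_ofReal (by positivity),
    ENNReal.ofReal_rpow_of_pos (by positivity), ← Real.rpow_mul ht.le, neg_mul,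
    inv_mul_cancel₀ hr.ne', Real.rpow_neg_one, ENNReal.ofReal_inv_of_pos ht, div_eq_mul_inv,
    mul_comm]

section Transfer

variable {α C : ℝ} {fX fY : ℝ → ℝ}

lemma eLpNorm_top_le_of_enorm_comp_rpow_le (hα : 0 < α)
    (h : ∀ s ∈ Ioo (0:ℝ) 1, ‖fY (s ^ α)‖ₑ ≤ ENNReal.ofReal C * ‖fX s‖ₑ ^ α) :
    eLpNorm fY ⊤ (volume.restrict (Ioo (0:ℝ) 1))
      ≤ ENNReal.ofReal C * eLpNorm fX ⊤ (volume.restrict (Ioo (0:ℝ) 1)) ^ α := by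
  rw [eLpNorm_exponent_top, eLpNorm_exponent_top]
  refine eLpNormEssSup_le_of_ae_enorm_bound ?_
  filter_upwards [ae_restrict_Ioo_comp_rpow_inv hα (ae_le_eLpNormEssSup (f := fX)),
    ae_restrict_mem measurableSet_Ioo] with t hXt ht
  calc ‖fY t‖ₑ = ‖fY ((t ^ α⁻¹) ^ α)‖ₑ := by rw [Real.rpow_inv_rpow ht.1.le hα.ne']
    _ ≤ ENNReal.ofReal C * ‖fX (t ^ α⁻¹)‖ₑ ^ α := h _ (rpow_mem_Ioo_zero_one ht (inv_pos.2 hα))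
    _ ≤ ENNReal.ofReal C * eLpNormEssSup fX (volume.restrict (Ioo (0:ℝ) 1)) ^ α := by
        gcongr

lemma lintegral_div_rpow_le_of_enorm_comp_rpow_le (hα : 0 < α) {r : ℝ} (hr : 0 < r)
    (h : ∀ s ∈ Ioo (0:ℝ) 1, ‖fY (s ^ α)‖ₑ ≤ ENNReal.ofReal C * ‖fX s‖ₑ ^ α) :
    (∫⁻ t in Ioo (0:ℝ) 1, ‖fY t‖ₑ ^ (r / α) / ENNReal.ofReal t) ^ (α / r)
      ≤ ENNReal.ofReal (α ^ (α / r) * C) *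
          ((∫⁻ t in Ioo (0:ℝ) 1, ‖fX t‖ₑ ^ r / ENNReal.ofReal t) ^ (1 / r)) ^ α := by
  have hrα : 0 < r / α := div_pos hr hα
  have hpow : ∀ s ∈ Ioo (0:ℝ) 1, ‖fY (s ^ α)‖ₑ ^ (r / α) / ENNReal.ofReal s
      ≤ ENNReal.ofReal C ^ (r / α) * (‖fX s‖ₑ ^ r / ENNReal.ofReal s) := fun s hs => by
    calc ‖fY (s ^ α)‖ₑ ^ (r / α) / ENNReal.ofReal s
        ≤ (ENNReal.ofReal C * ‖fX s‖ₑ ^ α) ^ (r / α) / ENNReal.ofReal s := by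
          gcongr
          exact h s hs
      _ = ENNReal.ofReal C ^ (r / α) * (‖fX s‖ₑ ^ r / ENNReal.ofReal s) := by
          rw [ENNReal.mul_rpow_of_nonneg _ _ hrα.le, ← ENNReal.rpow_mul, mul_div_cancel₀ _ hα.ne',
            mul_div_assoc]
  calc (∫⁻ t in Ioo (0:ℝ) 1, ‖fY t‖ₑ ^ (r / α) / ENNReal.ofReal t) ^ (α / r)
      = (ENNReal.ofReal α * ∫⁻ s in Ioo (0:ℝ) 1, ‖fY (s ^ α)‖ₑ ^ (r / α) / ENNReal.ofReal s)
          ^ (α / r) := by rw [lintegral_Ioo_div_eq_lintegral_comp_rpow hα]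
    _ ≤ (ENNReal.ofReal α * ∫⁻ s in Ioo (0:ℝ) 1,
          ENNReal.ofReal C ^ (r / α) * (‖fX s‖ₑ ^ r / ENNReal.ofReal s)) ^ (α / r) := by
        gcongr (_ * ?_) ^ _
        exact setLIntegral_mono' measurableSet_Ioo hpow
    _ = ENNReal.ofReal (α ^ (α / r) * C) *
          ((∫⁻ t in Ioo (0:ℝ) 1, ‖fX t‖ₑ ^ r / ENNReal.ofReal t) ^ (1 / r)) ^ α := by
        have hαr : 0 ≤ α / r := by positivity
        have hinv : r / α * (α / r) = 1 := by field_simp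
        rw [lintegral_const_mul' _ _ (ENNReal.rpow_ne_top_of_nonneg hrα.le ENNReal.ofReal_ne_top),
          ← mul_assoc, ENNReal.mul_rpow_of_nonneg _ _ hαr, ENNReal.mul_rpow_of_nonneg _ _ hαr,
          ← ENNReal.rpow_mul, ← ENNReal.rpow_mul, hinv, ENNReal.rpow_one,
          ENNReal.ofReal_mul (by positivity), ENNReal.ofReal_rpow_of_nonneg hα.le hαr,
          one_div_mul_eq_div]

end Transfer

lemma eLpNorm_rpow_mul_eq_lintegral {θ : ℝ} {p : ℝ≥0∞} (hp0 : p ≠ 0) (hpt : p ≠ ⊤) (f : ℝ → ℝ) :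
    eLpNorm (fun t => t ^ (-θ - 1 / p.toReal) * f t) p (volume.restrict (Ioo (0:ℝ) 1))
      = (∫⁻ t in Ioo (0:ℝ) 1, ‖t ^ (-θ) * f t‖ₑ ^ p.toReal / ENNReal.ofReal t)
          ^ (1 / p.toReal) := by
  have hr : 0 < p.toReal := ENNReal.toReal_pos hp0 hpt
  rw [eLpNorm_eq_lintegral_rpow_enorm_toReal hp0 hpt]
  congr 1
  refine setLIntegral_congr_fun measurableSet_Ioo fun t ht => ?_
  rw [← enorm_rpow_neg_inv_mul_rpow ht.1 hr, ← mul_assoc, ← Real.rpow_add ht.1, one_div,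
    neg_add_eq_sub]

lemma enorm_le_ofReal_mul_enorm_rpow {x y c α : ℝ} (hx : 0 ≤ x) (hy : 0 ≤ y) (hα : 0 ≤ α)
    (h : y ≤ c * x ^ α) : ‖y‖ₑ ≤ ENNReal.ofReal c * ‖x‖ₑ ^ α := by
  rw [Real.enorm_eq_ofReal hy, Real.enorm_eq_ofReal hx, ENNReal.ofReal_rpow_of_nonneg hx hα]
  exact (ENNReal.ofReal_le_ofReal h).trans_eq (ENNReal.ofReal_mul' (by positivity))

theorem eLpNorm_logWeight_le {α C θ lam : ℝ} {p : ℝ≥0∞} {kx ky : ℝ → ℝ} (hα0 : 0 < α)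
    (hα1 : α ≤ 1) (hC : 0 ≤ C) (hp0 : p ≠ 0) (hkx : ∀ s ∈ Ioo (0:ℝ) 1, 0 ≤ kx s)
    (hky : ∀ t ∈ Ioo (0:ℝ) 1, 0 ≤ ky t) (hkxy : ∀ s ∈ Ioo (0:ℝ) 1, ky (s ^ α) ≤ C * kx s ^ α) :
    eLpNorm (fun t => t ^ (-θ - 1 / (p / ENNReal.ofReal α).toReal) * (1 - Real.log t) ^ (lam * α)
        * ky t) (p / ENNReal.ofReal α) (volume.restrict (Ioo (0:ℝ) 1))
      ≤ ENNReal.ofReal (α ^ (α / p.toReal) * (C * max 1 (α ^ (lam * α)))) *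
        eLpNorm (fun t => t ^ (-θ - 1 / p.toReal) * (1 - Real.log t) ^ lam * kx t) p
          (volume.restrict (Ioo (0:ℝ) 1)) ^ α := by
  have hweight : ∀ t ∈ Ioo (0:ℝ) 1, ∀ e k : ℝ, 0 ≤ k →
      0 ≤ t ^ (-θ) * ((1 - Real.log t) ^ e * k) := fun t ht e k hk => by
      have : 0 ≤ 1 - Real.log t := by linarith [Real.log_nonpos ht.1.le ht.2.le]
      have := ht.1
      positivity
  have hpoint : ∀ s ∈ Ioo (0:ℝ) 1,
      ‖(s ^ α) ^ (-θ) * ((1 - Real.log (s ^ α)) ^ (lam * α) * ky (s ^ α))‖ₑ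
        ≤ ENNReal.ofReal (C * max 1 (α ^ (lam * α))) *
          ‖s ^ (-θ) * ((1 - Real.log s) ^ lam * kx s)‖ₑ ^ α := fun s hs =>
    have hsα := rpow_mem_Ioo_zero_one hs hα0
    enorm_le_ofReal_mul_enorm_rpow (hweight s hs _ _ (hkx s hs))
      (hweight _ hsα _ _ (hky _ hsα)) hα0.le
      (logWeight_rpow_le hα0 hα1 hC hs.1 hs.2.le (hkx s hs) (hkxy s hs))
  simp only [mul_assoc]
  rcases eq_or_ne p ⊤ with rfl | hpt
  · simpa [ENNReal.top_div_of_ne_top ENNReal.ofReal_ne_top] using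
      eLpNorm_top_le_of_enorm_comp_rpow_le hα0 hpoint
  · have hr : 0 < p.toReal := ENNReal.toReal_pos hp0 hpt
    have hq0 : p / ENNReal.ofReal α ≠ 0 := ENNReal.div_ne_zero.2 ⟨hp0, ENNReal.ofReal_ne_top⟩
    have hqt : p / ENNReal.ofReal α ≠ ⊤ := ENNReal.div_ne_top hpt (by simpa using hα0)
    rw [eLpNorm_rpow_mul_eq_lintegral hq0 hqt, eLpNorm_rpow_mul_eq_lintegral hp0 hpt,
      ENNReal.toReal_div, ENNReal.toReal_ofReal hα0.le, one_div_div]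
    exact lintegral_div_rpow_le_of_enorm_comp_rpow_le hα0 hr hpoint

/-- Let `X₁ ⊆ X₀`, `Y₁ ⊆ Y₀` be normed spaces, `0 < α ≤ 1`, and let
`T : X₀ → Y₀` with `T(X₁) ⊆ Y₁` be globally `α`-Hölderian from `X₀` to `Y₀` (constant `M₀`)
and from `X₁` to `Y₁` (constant `M₁`). Let `0 ≤ θ ≤ 1`, `1 ≤ p ≤ ∞`, `λ ∈ ℝ`, and assume
`X₁` dense in `X₀`. Then `T` is `α`-Hölderian from `(X₀,X₁)_{θ,p;λ}` into
`(Y₀,Y₁)_{θ,p/α;λα}`, with a constant `c₀ > 0` depending only on `M₀, M₁, α, p, λ`. -/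
theorem stmt4 (M0 M1 α : ℝ) (p : ℝ≥0∞) (lam : ℝ)
    (hM0 : 0 < M0) (hM1 : 0 < M1) (hα0 : 0 < α) (hα1 : α ≤ 1) (hp : 1 ≤ p) :
    ∃ c0 : ℝ, 0 < c0 ∧
      ∀ (θ : ℝ), 0 ≤ θ → θ ≤ 1 →
      ∀ (X0 Y0 : Type) [NormedAddCommGroup X0] [NormedAddCommGroup Y0]
        (X1 : AddSubgroup X0) (Y1 : AddSubgroup Y0) (N1 : X0 → ℝ) (NY1 : Y0 → ℝ),
        (∀ x, 0 ≤ N1 x) → (∀ y, 0 ≤ NY1 y) →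
      ∀ (T : X0 → Y0), (∀ a ∈ X1, T a ∈ Y1) →
        (∀ a b : X0, ‖T a - T b‖ ≤ M0 * ‖a - b‖ ^ α) →
        (∀ a ∈ X1, ∀ b ∈ X1, NY1 (T a - T b) ≤ M1 * N1 (a - b) ^ α) →
        Dense (X1 : Set X0) →
      ∀ a b : X0, interpNorm X1 N1 θ lam p a < ⊤ → interpNorm X1 N1 θ lam p b < ⊤ →
        interpNorm Y1 NY1 θ (lam * α) (p / ENNReal.ofReal α) (T a - T b) ≤
          ENNReal.ofReal c0 * interpNorm X1 N1 θ lam p (a - b) ^ α := by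
  refine ⟨α ^ (α / p.toReal) * ((M0 + M1) * max 1 (α ^ (lam * α))), by positivity, ?_⟩
  intro θ _ _ X0 Y0 _ _ X1 Y1 N1 NY1 hN1 hNY1 T hT1 hT0 hTH hdense a b _ _
  exact eLpNorm_logWeight_le hα0 hα1 (by positivity) (zero_lt_one.trans_le hp).ne'
    (fun s hs => Kfun_nonneg hN1 _ hs.1.le) (fun t ht => Kfun_nonneg hNY1 _ ht.1.le)
    (fun s hs => Kfun_map_sub_le hN1 hNY1 hM0.le hM1.le hα0 hT1 hT0 hTH hdense a b hs.1.le)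
end

section
/- (Anisotropic Poincaré–Sobolev inequality.) Let n ≥ 2, let p₁, …, pₙ satisfy 1 ≤ pᵢ < ∞, define 1/p = (1/n)·∑_{i=1}^n 1/pᵢ, assume ∑_{i=1}^n 1/pᵢ > 1, and set p* = np/(n−p). Then there exists a constant C = C(n, p₁, …, pₙ) such that for all v ∈ C_c^∞(ℝⁿ) (hence, by density, for all v in the anisotropic Sobolev space W₀^{1,p⃗}(Ω) of a bounded open set Ω): [ ∫ |v|^{p*} dx ]^{1/p*} ≤ C · ( ∑_{i=1}^n ∫ |∂v/∂xᵢ|^{pᵢ} dx )^{1/p}. -/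
/-!
Troisi's argument. In direction `i` the fundamental theorem of calculus, applied to `|v| ^ tᵢ` with
`tᵢ = 1 + p* (1 - 1/pᵢ)`, bounds `|v(x)| ^ tᵢ` by `tᵢ ∫ |v| ^ (tᵢ - 1) |∂ᵢv|` over the line through
`x` parallel to the `i`-th axis. Since `∑ tᵢ = (n - 1) p*`, the product of these `n` bounds raised
to `1/(n - 1)` dominates `|v| ^ p*`, and the Loomis–Whitney (grid-lines) inequality integrates it
to `∏ᵢ (∫ |v| ^ (tᵢ - 1) |∂ᵢv|) ^ (1/(n - 1))`. Hölder with exponents `pᵢ'` and `pᵢ` bounds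
the `i`-th factor by `(∫ |v| ^ p*) ^ (1 - 1/pᵢ) (∫ |∂ᵢv| ^ pᵢ) ^ (1/pᵢ)`, so `∫ |v| ^ p*`
reappears on the right with exponent `(n - ∑ 1/pᵢ)/(n - 1)`, which is `< 1` exactly because
`∑ 1/pᵢ > 1`; being finite, it can be absorbed into the left-hand side.
-/

open MeasureTheory
open scoped ENNReal

/-- The harmonic-mean exponent `p` defined by `1/p = (1/n) ∑ᵢ 1/pᵢ`. -/
noncomputable def pbar (n : ℕ) (p : Fin n → ℝ) : ℝ := n / ∑ i, 1 / p i

/-- The anisotropic Sobolev exponent `p* = np/(n−p)`. -/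
noncomputable def pstar (n : ℕ) (p : Fin n → ℝ) : ℝ :=
  n * pbar n p / (n - pbar n p)

open Function Set Finset

theorem ENNReal.rpow_sum_of_nonneg {ι : Type*} (x : ℝ≥0∞) {s : Finset ι} {a : ι → ℝ}
    (ha : ∀ i ∈ s, 0 ≤ a i) : x ^ (∑ i ∈ s, a i) = ∏ i ∈ s, x ^ a i := by
  induction s using cons_induction with
  | empty => simp
  | cons i s hi ih =>
    rw [forall_mem_cons] at ha
    rw [sum_cons, prod_cons, ENNReal.rpow_add_of_nonneg _ _ ha.1 (sum_nonneg ha.2), ih ha.2]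

theorem ENNReal.prod_rpow_mul_rpow_rpow {ι : Type*} (s : Finset ι) (x y : ℝ≥0∞)
    {a b : ι → ℝ} {r : ℝ} (ha : ∀ i ∈ s, 0 ≤ a i) (hb : ∀ i ∈ s, 0 ≤ b i) (hr : 0 ≤ r) :
    ∏ i ∈ s, (x ^ a i * y ^ b i) ^ r = x ^ ((∑ i ∈ s, a i) * r) * y ^ ((∑ i ∈ s, b i) * r) := by
  simp_rw [ENNReal.mul_rpow_of_nonneg _ _ hr, ← ENNReal.rpow_mul, prod_mul_distrib, sum_mul]
  rw [ENNReal.rpow_sum_of_nonneg _ fun i hi => mul_nonneg (ha i hi) hr,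
    ENNReal.rpow_sum_of_nonneg _ fun i hi => mul_nonneg (hb i hi) hr]

theorem ENNReal.rpow_one_sub_le_of_le_rpow_mul {x c : ℝ≥0∞} {θ : ℝ} (hx : x ≠ ∞)
    (hθ₀ : 0 ≤ θ) (hθ₁ : θ < 1) (h : x ≤ x ^ θ * c) : x ^ (1 - θ) ≤ c := by
  rcases eq_or_ne x 0 with rfl | hx₀
  · simp [ENNReal.zero_rpow_of_pos (sub_pos.2 hθ₁)]
  have hxθ₀ : x ^ θ ≠ 0 := (ENNReal.rpow_pos (pos_iff_ne_zero.2 hx₀) hx).ne'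
  have hxθ : x ^ θ ≠ ∞ := ENNReal.rpow_ne_top_of_nonneg hθ₀ hx
  rw [← ENNReal.mul_le_mul_iff_right hxθ₀ hxθ, ← ENNReal.rpow_add_of_nonneg _ _ hθ₀
    (sub_nonneg.2 hθ₁.le), add_sub_cancel, ENNReal.rpow_one]
  exact h

theorem lintegral_rpow_mul_le {α : Type*} [MeasurableSpace α] {μ : Measure α}
    {f g : α → ℝ≥0∞} (hf : AEMeasurable f μ) (hg : AEMeasurable g μ) {p : ℝ} (hp : 1 ≤ p)
    (s : ℝ) :
    ∫⁻ x, f x ^ (s * (1 - 1 / p)) * g x ∂μ ≤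
      (∫⁻ x, f x ^ s ∂μ) ^ (1 - 1 / p) * (∫⁻ x, g x ^ p ∂μ) ^ (1 / p) := by
  rcases hp.eq_or_lt with rfl | hp
  · simp
  have hpq : (p.conjExponent).HolderConjugate p := (Real.HolderConjugate.conjExponent hp).symm
  have hexp : 1 / p.conjExponent = 1 - 1 / p := by
    rw [Real.conjExponent]; field_simp
  have hmul : s * (1 - 1 / p) * p.conjExponent = s := by
    rw [Real.conjExponent]; field_simp
  calc ∫⁻ x, f x ^ (s * (1 - 1 / p)) * g x ∂μ
      = ∫⁻ x, ((fun x => f x ^ (s * (1 - 1 / p))) * g) x ∂μ := rfl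
    _ ≤ _ := ENNReal.lintegral_mul_le_Lp_mul_Lq μ hpq (hf.pow_const _) hg
    _ = _ := by simp_rw [← ENNReal.rpow_mul, hmul, hexp]

theorem ofReal_integral_abs_rpow {X : Type*} [MeasurableSpace X] [TopologicalSpace X]
    [OpensMeasurableSpace X] {μ : Measure X} [IsFiniteMeasureOnCompacts μ] {g : X → ℝ}
    (hg : Continuous g) (h2g : HasCompactSupport g) {q : ℝ} (hq : 0 < q) :
    ENNReal.ofReal (∫ x, |g x| ^ q ∂μ) = ∫⁻ x, ‖g x‖ₑ ^ q ∂μ := by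
  have hcs : HasCompactSupport fun x => |g x| ^ q :=
    h2g.comp_left (g := fun y : ℝ => |y| ^ q) (by simp [hq.ne'])
  rw [ofReal_integral_eq_lintegral_ofReal
    ((hg.abs.rpow_const fun _ => .inr hq.le).integrable_of_hasCompactSupport hcs)
    (.of_forall fun x => by positivity)]
  simp_rw [← ENNReal.ofReal_rpow_of_nonneg (abs_nonneg _) hq.le, Real.enorm_eq_ofReal_abs]

theorem lintegral_enorm_rpow_ne_top {X : Type*} [MeasurableSpace X] [TopologicalSpace X]
    [OpensMeasurableSpace X] {μ : Measure X} [IsFiniteMeasureOnCompacts μ] {g : X → ℝ}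
    (hg : Continuous g) (h2g : HasCompactSupport g) {q : ℝ} (hq : 0 < q) :
    ∫⁻ x, ‖g x‖ₑ ^ q ∂μ ≠ ∞ := by
  rw [← ofReal_integral_abs_rpow hg h2g hq]
  exact ENNReal.ofReal_ne_top

theorem norm_fderiv_norm_rpow_apply_le {E F : Type*} [NormedAddCommGroup E]
    [InnerProductSpace ℝ E] [NormedAddCommGroup F] [NormedSpace ℝ F] {f : F → E}
    (hf : Differentiable ℝ f) {x : F} {t : ℝ} (ht : 1 < t) (e : F) :
    ‖fderiv ℝ (fun x ↦ ‖f x‖ ^ t) x e‖ ≤ t * (‖f x‖ ^ (t - 1) * ‖fderiv ℝ f x e‖) := by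
  rw [hf.fderiv_norm_rpow ht, smul_apply, ContinuousLinearMap.comp_apply,
    innerSL_apply_apply, norm_smul, norm_mul, Real.norm_of_nonneg (by linarith),
    Real.norm_of_nonneg (by positivity), mul_assoc]
  refine mul_le_mul_of_nonneg_left ?_ (by linarith)
  calc ‖f x‖ ^ (t - 2) * ‖inner ℝ (f x) (fderiv ℝ f x e)‖
      ≤ ‖f x‖ ^ (t - 2) * (‖f x‖ * ‖fderiv ℝ f x e‖) := by
        gcongr; exact norm_inner_le_norm _ _
    _ = ‖f x‖ ^ (t - 1) * ‖fderiv ℝ f x e‖ := by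
        rw [← mul_assoc, ← Real.rpow_add_one' (norm_nonneg _) (by linarith)]
        ring_nf

/-- The normalisation `∑ⱼ fⱼ / ∫ fⱼ` reduces this to the one-function grid-lines inequality. -/
theorem lintegral_prod_lintegral_pow_le_prod {ι : Type*} [Fintype ι] [DecidableEq ι]
    {A : ι → Type*} [∀ i, MeasurableSpace (A i)] (μ : ∀ i, Measure (A i))
    [∀ i, SigmaFinite (μ i)] {q : ℝ} (hq : Real.HolderConjugate (Fintype.card ι) q)
    {f : ι → (∀ i, A i) → ℝ≥0∞} (hf : ∀ i, Measurable (f i))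
    (h₀ : ∀ i, ∫⁻ x, f i x ∂.pi μ ≠ 0) (h_top : ∀ i, ∫⁻ x, f i x ∂.pi μ ≠ ∞) :
    ∫⁻ x, ∏ i, (∫⁻ xᵢ, f i (update x i xᵢ) ∂μ i) ^ ((1 : ℝ) / (Fintype.card ι - 1)) ∂.pi μ ≤
      (Fintype.card ι : ℝ≥0∞) ^ q *
        ∏ i, (∫⁻ x, f i x ∂.pi μ) ^ ((1 : ℝ) / (Fintype.card ι - 1)) := by
  set r : ℝ := 1 / (Fintype.card ι - 1)
  have hr : 0 ≤ r := one_div_nonneg.2 (sub_nonneg.2 hq.lt.le)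
  set B : ι → ℝ≥0∞ := fun i => ∫⁻ x, f i x ∂.pi μ
  set F : (∀ i, A i) → ℝ≥0∞ := fun x => ∑ j, (B j)⁻¹ * f j x
  have hF : Measurable F := Finset.measurable_sum _ fun j _ => (hf j).const_mul _
  have hF_int : ∫⁻ x, F x ∂.pi μ = Fintype.card ι := by
    rw [lintegral_finsetSum _ fun j _ => (hf j).const_mul _]
    simp_rw [lintegral_const_mul _ (hf _), B, ENNReal.inv_mul_cancel (h₀ _) (h_top _)]
    simp
  have hline : ∀ x i, (B i)⁻¹ * ∫⁻ xᵢ, f i (update x i xᵢ) ∂μ i ≤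
      ∫⁻ xᵢ, F (update x i xᵢ) ∂μ i := fun x i => by
    rw [← lintegral_const_mul' _ _ (ENNReal.inv_ne_top.2 (h₀ i))]
    exact lintegral_mono fun xᵢ =>
      single_le_sum (f := fun j => (B j)⁻¹ * f j (update x i xᵢ))
        (fun j _ => zero_le) (mem_univ i)
  have hprod_top : ∏ i, B i ^ r ≠ ∞ :=
    ENNReal.prod_ne_top fun i _ => ENNReal.rpow_ne_top_of_nonneg hr (h_top i)
  calc ∫⁻ x, ∏ i, (∫⁻ xᵢ, f i (update x i xᵢ) ∂μ i) ^ r ∂.pi μ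
      = ∫⁻ x, (∏ i, B i ^ r) * ∏ i, ((B i)⁻¹ * ∫⁻ xᵢ, f i (update x i xᵢ) ∂μ i) ^ r ∂.pi μ := by
        congr with x
        rw [← prod_mul_distrib]
        congr with i
        rw [← ENNReal.mul_rpow_of_nonneg _ _ hr, ← mul_assoc,
          ENNReal.mul_inv_cancel (h₀ i) (h_top i), one_mul]
    _ = (∏ i, B i ^ r) *
          ∫⁻ x, ∏ i, ((B i)⁻¹ * ∫⁻ xᵢ, f i (update x i xᵢ) ∂μ i) ^ r ∂.pi μ :=
        lintegral_const_mul' _ _ hprod_top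
    _ ≤ (∏ i, B i ^ r) * ∫⁻ x, ∏ i, (∫⁻ xᵢ, F (update x i xᵢ) ∂μ i) ^ r ∂.pi μ := by
        gcongr with x i
        exact hline x i
    _ ≤ (∏ i, B i ^ r) * (∫⁻ x, F x ∂.pi μ) ^ q := by
        gcongr
        exact lintegral_prod_lintegral_pow_le μ hq hF
    _ = (Fintype.card ι : ℝ≥0∞) ^ q * ∏ i, B i ^ r := by rw [hF_int, mul_comm]

section Lines

variable {ι : Type*} [Fintype ι] [DecidableEq ι]

theorem enorm_le_lintegral_fderiv_update {F : Type*} [NormedAddCommGroup F] [NormedSpace ℝ F]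
    {w : (ι → ℝ) → F} (hw : ContDiff ℝ 1 w) (h2w : HasCompactSupport w) (x : ι → ℝ) (i : ι) :
    ‖w x‖ₑ ≤ ∫⁻ s, ‖fderiv ℝ w (update x i s) (Pi.single i 1)‖ₑ := by
  calc ‖w x‖ₑ
      ≤ ∫⁻ s in Iic (x i), ‖deriv (w ∘ update x i) s‖ₑ := by
        apply le_trans (by simp) (HasCompactSupport.enorm_le_lintegral_Ici_deriv _ _ _)
        · exact hw.comp (by convert contDiff_update 1 x i)
        · exact h2w.comp_isClosedEmbedding (isClosedEmbedding_update x i)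
    _ ≤ ∫⁻ s, ‖deriv (w ∘ update x i) s‖ₑ := lintegral_mono' Measure.restrict_le_self le_rfl
    _ = ∫⁻ s, ‖fderiv ℝ w (update x i s) (Pi.single i 1)‖ₑ := by
        congr with s
        rw [fderiv_comp_deriv _ (hw.differentiable one_ne_zero).differentiableAt
          (hasDerivAt_update x i s).differentiableAt, deriv_update]

noncomputable def weightedPartial (u : (ι → ℝ) → ℝ) (t : ℝ) (i : ι) (x : ι → ℝ) : ℝ :=
  ‖u x‖ ^ (t - 1) * fderiv ℝ u x (Pi.single i 1)

variable {u : (ι → ℝ) → ℝ} {t : ℝ}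

theorem continuous_weightedPartial (hu : ContDiff ℝ 1 u) (ht : 1 ≤ t) (i : ι) :
    Continuous (weightedPartial u t i) :=
  (hu.continuous.norm.rpow_const fun _ => .inr (by linarith)).mul
    ((hu.continuous_fderiv one_ne_zero).clm_apply continuous_const)

/-- For `t > 1` this is the fundamental theorem of calculus applied to `‖u‖ ^ t`, which is `C¹`. -/
theorem enorm_rpow_le_lintegral_weightedPartial (hu : ContDiff ℝ 1 u)
    (h2u : HasCompactSupport u) (ht : 1 ≤ t) (x : ι → ℝ) (i : ι) :
    ‖u x‖ₑ ^ t ≤ ENNReal.ofReal t * ∫⁻ s, ‖weightedPartial u t i (update x i s)‖ₑ := by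
  rcases ht.eq_or_lt with rfl | ht
  · simpa [weightedPartial] using enorm_le_lintegral_fderiv_update hu h2u x i
  have hw : HasCompactSupport fun y => ‖u y‖ ^ t :=
    h2u.comp_left (g := fun a : ℝ => ‖a‖ ^ t) (by simp [(zero_lt_one.trans ht).ne'])
  calc ‖u x‖ₑ ^ t = ‖‖u x‖ ^ t‖ₑ := by
        rw [Real.enorm_rpow_of_nonneg (norm_nonneg _) (by linarith), enorm_norm]
    _ ≤ ∫⁻ s, ‖fderiv ℝ (fun y => ‖u y‖ ^ t) (update x i s) (Pi.single i 1)‖ₑ :=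
        enorm_le_lintegral_fderiv_update (hu.norm_rpow ht) hw x i
    _ ≤ ∫⁻ s, ENNReal.ofReal t * ‖weightedPartial u t i (update x i s)‖ₑ := by
        refine lintegral_mono fun s => ?_
        rw [← Real.enorm_of_nonneg (by linarith), ← enorm_mul, enorm_le_iff_norm_le,
          weightedPartial, norm_mul, norm_mul, Real.norm_of_nonneg (show (0 : ℝ) ≤ t by linarith),
          Real.norm_of_nonneg (Real.rpow_nonneg (norm_nonneg (u (update x i s))) _)]
        exact norm_fderiv_norm_rpow_apply_le (hu.differentiable one_ne_zero) ht _
    _ = _ := lintegral_const_mul' _ _ ENNReal.ofReal_ne_top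

theorem lintegral_enorm_weightedPartial_ne_zero (hu : ContDiff ℝ 1 u)
    (h2u : HasCompactSupport u) (ht : 1 ≤ t) (hu0 : u ≠ 0) (i : ι) :
    ∫⁻ x, ‖weightedPartial u t i x‖ₑ ≠ 0 := by
  intro h
  have hcont := (continuous_weightedPartial hu ht i).enorm
  have hzero : (fun x => ‖weightedPartial u t i x‖ₑ) = 0 :=
    (Continuous.ae_eq_iff_eq volume hcont continuous_const).1
      ((lintegral_eq_zero_iff hcont.measurable).1 h)
  refine hu0 (funext fun x => ?_)
  have hx := enorm_rpow_le_lintegral_weightedPartial hu h2u ht x i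
  simp only [congrFun hzero, Pi.zero_apply, lintegral_zero, mul_zero, nonpos_iff_eq_zero] at hx
  simpa using (ENNReal.rpow_eq_zero_iff_of_pos (by linarith)).1 hx

end Lines

section Exponents

variable {n : ℕ} {p : Fin n → ℝ}

theorem pstar_eq (hsum : 1 < ∑ i, 1 / p i) : pstar n p = n / (∑ i, 1 / p i - 1) := by
  rcases eq_or_ne (n : ℝ) 0 with hn | hn
  · simp [pstar, pbar, hn]
  have hS : ∑ i, 1 / p i - 1 ≠ 0 := by linarith
  rw [pstar, pbar]
  field_simp

theorem pstar_pos (hn : 0 < n) (hsum : 1 < ∑ i, 1 / p i) : 0 < pstar n p := by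
  rw [pstar_eq hsum]
  exact div_pos (by exact_mod_cast hn) (by linarith)

noncomputable def troisiExponent (n : ℕ) (p : Fin n → ℝ) (i : Fin n) : ℝ :=
  1 + pstar n p * (1 - 1 / p i)

theorem one_le_troisiExponent (hn : 0 < n) (hsum : 1 < ∑ i, 1 / p i) {i : Fin n}
    (hp : 1 ≤ p i) : 1 ≤ troisiExponent n p i := by
  have : 0 ≤ 1 - 1 / p i := by rw [sub_nonneg, div_le_one (by linarith)]; exact hp
  have := mul_nonneg (pstar_pos hn hsum).le this
  rw [troisiExponent]; linarith

theorem sum_troisiExponent (hsum : 1 < ∑ i, 1 / p i) :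
    ∑ i, troisiExponent n p i = (n - 1) * pstar n p := by
  have hS : ∑ i, 1 / p i - 1 ≠ 0 := by linarith
  simp only [troisiExponent, sum_add_distrib, ← mul_sum, sum_sub_distrib, sum_const, card_univ,
    Fintype.card_fin, nsmul_eq_mul, mul_one, pstar_eq hsum]
  field_simp
  ring

theorem one_div_pstar (hsum : 1 < ∑ i, 1 / p i) :
    1 / pstar n p = (∑ i, 1 / p i - 1) / n := by
  rw [pstar_eq hsum, one_div_div]

theorem one_div_pbar : 1 / pbar n p = (∑ i, 1 / p i) / n := by
  rw [pbar, one_div_div]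

theorem rpow_pstar_eq_prod (hn : 2 ≤ n) (hp : ∀ i, 1 ≤ p i) (hsum : 1 < ∑ i, 1 / p i)
    (a : ℝ≥0∞) :
    a ^ pstar n p = ∏ i, (a ^ troisiExponent n p i) ^ ((1 : ℝ) / (n - 1)) := by
  have hn2 : (2 : ℝ) ≤ n := by exact_mod_cast hn
  have hn1 : (n : ℝ) - 1 ≠ 0 := by linarith
  have hr : (0 : ℝ) ≤ 1 / (n - 1) := one_div_nonneg.2 (by linarith)
  simp_rw [← ENNReal.rpow_mul]
  rw [← ENNReal.rpow_sum_of_nonneg _ fun i _ => mul_nonneg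
    (by linarith [one_le_troisiExponent (by omega) hsum (hp i)]) hr, ← sum_mul,
    sum_troisiExponent hsum]
  congr 1
  field_simp

noncomputable def anisoSobolevConst (n : ℕ) (p : Fin n → ℝ) : ℝ :=
  ((n : ℝ) ^ ((n : ℝ) / (n - 1)) * ∏ i, troisiExponent n p i ^ ((1 : ℝ) / (n - 1))) ^
    (((n : ℝ) - 1) / n)

theorem anisoSobolevConst_pos (hn : 0 < n) (hp : ∀ i, 1 ≤ p i) (hsum : 1 < ∑ i, 1 / p i) :
    0 < anisoSobolevConst n p := by
  have ht i : 0 < troisiExponent n p i := by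
    linarith [one_le_troisiExponent hn hsum (hp i)]
  unfold anisoSobolevConst
  exact Real.rpow_pos_of_pos (mul_pos (Real.rpow_pos_of_pos (by exact_mod_cast hn) _)
    (prod_pos fun i _ => Real.rpow_pos_of_pos (ht i) _)) _

theorem ofReal_anisoSobolevConst (hn : 0 < n) (hp : ∀ i, 1 ≤ p i) (hsum : 1 < ∑ i, 1 / p i) :
    ENNReal.ofReal (anisoSobolevConst n p) =
      ((n : ℝ≥0∞) ^ ((n : ℝ) / (n - 1)) *
        ∏ i, ENNReal.ofReal (troisiExponent n p i) ^ ((1 : ℝ) / (n - 1))) ^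
          (((n : ℝ) - 1) / n) := by
  have hn1 : (1 : ℝ) ≤ n := by exact_mod_cast hn
  have ht i : 0 ≤ troisiExponent n p i := by
    linarith [one_le_troisiExponent hn hsum (hp i)]
  have hr : (0 : ℝ) ≤ 1 / (n - 1) := one_div_nonneg.2 (by linarith)
  unfold anisoSobolevConst
  have hprod : 0 ≤ ∏ i, troisiExponent n p i ^ ((1 : ℝ) / (n - 1)) :=
    prod_nonneg fun i _ => Real.rpow_nonneg (ht i) _
  rw [← ENNReal.ofReal_rpow_of_nonneg (mul_nonneg (by positivity) hprod) (by positivity),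
    ENNReal.ofReal_mul (by positivity), ← ENNReal.ofReal_rpow_of_nonneg (by positivity)
    (by positivity), ENNReal.ofReal_natCast,
    ENNReal.ofReal_prod_of_nonneg fun i _ => Real.rpow_nonneg (ht i) _]
  simp_rw [ENNReal.ofReal_rpow_of_nonneg (ht _) hr]

end Exponents

section Core

variable {n : ℕ} {p : Fin n → ℝ} {u : (Fin n → ℝ) → ℝ}

theorem lintegral_rpow_pstar_le_lintegral_prod (hn : 2 ≤ n) (hp : ∀ i, 1 ≤ p i)
    (hsum : 1 < ∑ i, 1 / p i) (hu : ContDiff ℝ 1 u) (h2u : HasCompactSupport u) :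
    ∫⁻ x, ‖u x‖ₑ ^ pstar n p ≤
      (∏ i, ENNReal.ofReal (troisiExponent n p i) ^ ((1 : ℝ) / (n - 1))) *
        ∫⁻ x, ∏ i, (∫⁻ s, ‖weightedPartial u (troisiExponent n p i) i (update x i s)‖ₑ) ^
          ((1 : ℝ) / (n - 1)) := by
  have hr : (0 : ℝ) ≤ 1 / (n - 1) :=
    one_div_nonneg.2 (sub_nonneg.2 (by exact_mod_cast (by omega : 1 ≤ n)))
  calc ∫⁻ x, ‖u x‖ₑ ^ pstar n p
      = ∫⁻ x, ∏ i, (‖u x‖ₑ ^ troisiExponent n p i) ^ ((1 : ℝ) / (n - 1)) := by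
        simp_rw [rpow_pstar_eq_prod hn hp hsum]
    _ ≤ ∫⁻ x, ∏ i, (ENNReal.ofReal (troisiExponent n p i) *
          ∫⁻ s, ‖weightedPartial u (troisiExponent n p i) i (update x i s)‖ₑ) ^
            ((1 : ℝ) / (n - 1)) := by
        gcongr with x i
        exact enorm_rpow_le_lintegral_weightedPartial hu h2u
          (one_le_troisiExponent (by omega) hsum (hp i)) x i
    _ = _ := by
        simp_rw [ENNReal.mul_rpow_of_nonneg _ _ hr, prod_mul_distrib]
        exact lintegral_const_mul' _ _
          (ENNReal.prod_ne_top fun i _ => ENNReal.rpow_ne_top_of_nonneg hr ENNReal.ofReal_ne_top)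

theorem lintegral_enorm_weightedPartial_le (hn : 0 < n) (hsum : 1 < ∑ i, 1 / p i) {i : Fin n}
    (hp : 1 ≤ p i) (hu : ContDiff ℝ 1 u) :
    ∫⁻ x, ‖weightedPartial u (troisiExponent n p i) i x‖ₑ ≤
      (∫⁻ x, ‖u x‖ₑ ^ pstar n p) ^ (1 - 1 / p i) *
        (∫⁻ x, ‖fderiv ℝ u x (Pi.single i 1)‖ₑ ^ p i) ^ (1 / p i) := by
  have hD : Continuous fun x => fderiv ℝ u x (Pi.single i 1) :=
    (hu.continuous_fderiv one_ne_zero).clm_apply continuous_const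
  have ht : troisiExponent n p i - 1 = pstar n p * (1 - 1 / p i) := by
    rw [troisiExponent, add_sub_cancel_left]
  have ht₀ : 0 ≤ troisiExponent n p i - 1 := by
    linarith [one_le_troisiExponent hn hsum hp]
  simp_rw [weightedPartial, enorm_mul, Real.enorm_rpow_of_nonneg (norm_nonneg _) ht₀, enorm_norm,
    ht]
  exact lintegral_rpow_mul_le hu.continuous.enorm.aemeasurable hD.enorm.aemeasurable hp _

theorem lintegral_rpow_pstar_le_prod (hn : 2 ≤ n) (hp : ∀ i, 1 ≤ p i)
    (hsum : 1 < ∑ i, 1 / p i) (hu : ContDiff ℝ 1 u) (h2u : HasCompactSupport u) :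
    ∫⁻ x, ‖u x‖ₑ ^ pstar n p ≤
      ((n : ℝ≥0∞) ^ ((n : ℝ) / (n - 1)) *
          ∏ i, ENNReal.ofReal (troisiExponent n p i) ^ ((1 : ℝ) / (n - 1))) *
        ∏ i, ((∫⁻ x, ‖u x‖ₑ ^ pstar n p) ^ (1 - 1 / p i) *
          (∫⁻ x, ‖fderiv ℝ u x (Pi.single i 1)‖ₑ ^ p i) ^ (1 / p i)) ^ ((1 : ℝ) / (n - 1)) := by
  have hn0 : 0 < n := by omega
  have hP := pstar_pos hn0 hsum
  rcases eq_or_ne u 0 with rfl | hu0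
  · simp [ENNReal.zero_rpow_of_pos hP]
  have ht i := one_le_troisiExponent hn0 hsum (hp i)
  have hr : (0 : ℝ) ≤ 1 / (n - 1) :=
    one_div_nonneg.2 (sub_nonneg.2 (by exact_mod_cast hn0))
  have hq : Real.HolderConjugate (Fintype.card (Fin n)) ((n : ℝ) / (n - 1)) := by
    simpa [Real.conjExponent] using Real.HolderConjugate.conjExponent (by exact_mod_cast hn)
  have hX_top := lintegral_enorm_rpow_ne_top (μ := volume) hu.continuous h2u hP
  have hA_top i := lintegral_enorm_rpow_ne_top (μ := volume)
    ((hu.continuous_fderiv one_ne_zero).clm_apply continuous_const)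
    (h2u.fderiv_apply ℝ (Pi.single i 1)) (by linarith [hp i] : 0 < p i)
  have hB_top i : ∫⁻ x, ‖weightedPartial u (troisiExponent n p i) i x‖ₑ ≠ ∞ := by
    refine ((lintegral_enorm_weightedPartial_le hn0 hsum (hp i) hu).trans_lt
      (ENNReal.mul_lt_top (ENNReal.rpow_lt_top_of_nonneg ?_ hX_top)
        (ENNReal.rpow_lt_top_of_nonneg (one_div_nonneg.2 (by linarith [hp i])) (hA_top i)))).ne
    rw [sub_nonneg, div_le_one (by linarith [hp i])]
    exact hp i
  have hLW := lintegral_prod_lintegral_pow_le_prod (fun _ : Fin n => (volume : Measure ℝ)) hq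
    (fun i => (continuous_weightedPartial hu (ht i) i).enorm.measurable)
    (fun i => lintegral_enorm_weightedPartial_ne_zero hu h2u (ht i) hu0 i) hB_top
  simp only [Fintype.card_fin] at hLW
  calc ∫⁻ x, ‖u x‖ₑ ^ pstar n p
      ≤ _ := lintegral_rpow_pstar_le_lintegral_prod hn hp hsum hu h2u
    _ ≤ _ := mul_le_mul_right hLW _
    _ ≤ (∏ i, ENNReal.ofReal (troisiExponent n p i) ^ ((1 : ℝ) / (n - 1))) *
          ((n : ℝ≥0∞) ^ ((n : ℝ) / (n - 1)) *
            ∏ i, ((∫⁻ x, ‖u x‖ₑ ^ pstar n p) ^ (1 - 1 / p i) *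
              (∫⁻ x, ‖fderiv ℝ u x (Pi.single i 1)‖ₑ ^ p i) ^ (1 / p i)) ^
                ((1 : ℝ) / (n - 1))) := by
        gcongr with i
        exact lintegral_enorm_weightedPartial_le hn0 hsum (hp i) hu
    _ = _ := by ring

theorem rpow_lintegral_rpow_pstar_le (hn : 2 ≤ n) (hp : ∀ i, 1 ≤ p i)
    (hsum : 1 < ∑ i, 1 / p i) (hu : ContDiff ℝ 1 u) (h2u : HasCompactSupport u) :
    (∫⁻ x, ‖u x‖ₑ ^ pstar n p) ^ ((∑ i, 1 / p i - 1) / (n - 1)) ≤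
      ((n : ℝ≥0∞) ^ ((n : ℝ) / (n - 1)) *
          ∏ i, ENNReal.ofReal (troisiExponent n p i) ^ ((1 : ℝ) / (n - 1))) *
        (∑ i, ∫⁻ x, ‖fderiv ℝ u x (Pi.single i 1)‖ₑ ^ p i) ^ ((∑ i, 1 / p i) / (n - 1)) := by
  have hn1 : (1 : ℝ) < n := by exact_mod_cast hn
  have hr : (0 : ℝ) < 1 / (n - 1) := one_div_pos.2 (by linarith)
  set S := ∑ i, 1 / p i with hS_def
  set X := ∫⁻ x, ‖u x‖ₑ ^ pstar n p
  set A : Fin n → ℝ≥0∞ := fun i => ∫⁻ x, ‖fderiv ℝ u x (Pi.single i 1)‖ₑ ^ p i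
  set K : ℝ≥0∞ := (n : ℝ≥0∞) ^ ((n : ℝ) / (n - 1)) *
    ∏ i, ENNReal.ofReal (troisiExponent n p i) ^ ((1 : ℝ) / (n - 1))
  have ha i : 0 ≤ 1 / p i := one_div_nonneg.2 (by linarith [hp i])
  have ha' i : 0 ≤ 1 - 1 / p i := by
    rw [sub_nonneg, div_le_one (by linarith [hp i])]; exact hp i
  have hS : S ≤ n :=
    calc S ≤ ∑ _i : Fin n, (1 : ℝ) :=
          sum_le_sum fun i _ => (div_le_one (by linarith [hp i])).2 (hp i)
      _ = n := by simp
  have hchain : X ≤ X ^ ((n - S) / (n - 1)) * (K * (∑ i, A i) ^ (S / (n - 1))) :=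
    calc X ≤ K * ∏ i, (X ^ (1 - 1 / p i) * A i ^ (1 / p i)) ^ ((1 : ℝ) / (n - 1)) :=
          lintegral_rpow_pstar_le_prod hn hp hsum hu h2u
      _ ≤ K * ∏ i, (X ^ (1 - 1 / p i) * (∑ j, A j) ^ (1 / p i)) ^ ((1 : ℝ) / (n - 1)) := by
          refine mul_le_mul_right (prod_le_prod' fun i _ => ENNReal.rpow_le_rpow
            (mul_le_mul_right (ENNReal.rpow_le_rpow ?_ (ha i)) _) hr.le) _
          exact single_le_sum (fun j _ => zero_le) (mem_univ i)
      _ = X ^ ((n - S) / (n - 1)) * (K * (∑ i, A i) ^ (S / (n - 1))) := by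
          rw [ENNReal.prod_rpow_mul_rpow_rpow _ _ _ (fun i _ => ha' i) (fun i _ => ha i) hr.le,
            sum_sub_distrib, ← hS_def]
          simp only [sum_const, card_univ, Fintype.card_fin, nsmul_eq_mul, mul_one, mul_one_div]
          ring
  have habs := ENNReal.rpow_one_sub_le_of_le_rpow_mul
    (lintegral_enorm_rpow_ne_top hu.continuous h2u (pstar_pos (by omega) hsum))
    (div_nonneg (by linarith) (by linarith))
    (by rw [div_lt_one (by linarith)]; linarith) hchain
  convert habs using 2
  field_simp [show (n : ℝ) - 1 ≠ 0 by linarith]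
  ring

theorem lintegral_rpow_pstar_le (hn : 2 ≤ n) (hp : ∀ i, 1 ≤ p i)
    (hsum : 1 < ∑ i, 1 / p i) (hu : ContDiff ℝ 1 u) (h2u : HasCompactSupport u) :
    (∫⁻ x, ‖u x‖ₑ ^ pstar n p) ^ (1 / pstar n p) ≤
      ENNReal.ofReal (anisoSobolevConst n p) *
        (∑ i, ∫⁻ x, ‖fderiv ℝ u x (Pi.single i 1)‖ₑ ^ p i) ^ (1 / pbar n p) := by
  have hn1 : (1 : ℝ) < n := by exact_mod_cast hn
  have he : (0 : ℝ) ≤ ((n : ℝ) - 1) / n := by positivity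
  have hn1' : (n : ℝ) - 1 ≠ 0 := by linarith
  calc (∫⁻ x, ‖u x‖ₑ ^ pstar n p) ^ (1 / pstar n p)
      = ((∫⁻ x, ‖u x‖ₑ ^ pstar n p) ^ ((∑ i, 1 / p i - 1) / (n - 1))) ^
          (((n : ℝ) - 1) / n) := by
        rw [← ENNReal.rpow_mul, one_div_pstar hsum]
        field_simp
    _ ≤ _ := ENNReal.rpow_le_rpow (rpow_lintegral_rpow_pstar_le hn hp hsum hu h2u) he
    _ = _ := by
        rw [ENNReal.mul_rpow_of_nonneg _ _ he, ofReal_anisoSobolevConst (by omega) hp hsum,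
          ← ENNReal.rpow_mul, one_div_pbar]
        field_simp

end Core

theorem lintegral_comp_toLp {ι : Type*} [Fintype ι] (F : EuclideanSpace ℝ ι → ℝ≥0∞) :
    ∫⁻ y, F (WithLp.toLp 2 y) = ∫⁻ x, F x :=
  (PiLp.volume_preserving_toLp ι).lintegral_comp_emb
    (MeasurableEquiv.toLp 2 (ι → ℝ)).measurableEmbedding F

theorem fderiv_comp_toLp_single {ι : Type*} [Fintype ι] [DecidableEq ι]
    (v : EuclideanSpace ℝ ι → ℝ) (y : ι → ℝ) (i : ι) :
    fderiv ℝ (v ∘ WithLp.toLp 2) y (Pi.single i 1) =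
      fderiv ℝ v (WithLp.toLp 2 y) (EuclideanSpace.single i 1) := by
  rw [← PiLp.coe_symm_continuousLinearEquiv 2 ℝ, ContinuousLinearEquiv.comp_right_fderiv]
  rfl

theorem lintegral_rpow_pstar_le_euclidean {n : ℕ} {p : Fin n → ℝ} (hn : 2 ≤ n)
    (hp : ∀ i, 1 ≤ p i) (hsum : 1 < ∑ i, 1 / p i) {v : EuclideanSpace ℝ (Fin n) → ℝ}
    (hv : ContDiff ℝ 1 v) (h2v : HasCompactSupport v) :
    (∫⁻ x, ‖v x‖ₑ ^ pstar n p) ^ (1 / pstar n p) ≤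
      ENNReal.ofReal (anisoSobolevConst n p) *
        (∑ i, ∫⁻ x, ‖fderiv ℝ v x (EuclideanSpace.single i 1)‖ₑ ^ p i) ^ (1 / pbar n p) := by
  set e := (PiLp.continuousLinearEquiv 2 ℝ fun _ : Fin n => ℝ).symm
  have he : ⇑e = WithLp.toLp 2 := PiLp.coe_symm_continuousLinearEquiv 2 ℝ _
  have key := lintegral_rpow_pstar_le hn hp hsum (hv.comp e.contDiff)
    (h2v.comp_homeomorph e.toHomeomorph)
  rw [he] at key
  simp only [fderiv_comp_toLp_single, comp_apply] at key
  have hX : ∫⁻ y, ‖v (WithLp.toLp 2 y)‖ₑ ^ pstar n p = ∫⁻ x, ‖v x‖ₑ ^ pstar n p :=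
    lintegral_comp_toLp fun x => ‖v x‖ₑ ^ pstar n p
  have hA i : ∫⁻ y, ‖fderiv ℝ v (WithLp.toLp 2 y) (EuclideanSpace.single i 1)‖ₑ ^ p i =
      ∫⁻ x, ‖fderiv ℝ v x (EuclideanSpace.single i 1)‖ₑ ^ p i :=
    lintegral_comp_toLp fun x => ‖fderiv ℝ v x (EuclideanSpace.single i 1)‖ₑ ^ p i
  simpa only [hX, hA] using key

/-- **anisotropic Poincaré–Sobolev inequality.**
Let `n ≥ 2`, `1 ≤ pᵢ < ∞`, `1/p = (1/n)∑ᵢ 1/pᵢ` with `∑ᵢ 1/pᵢ > 1`, `p* = np/(n−p)`.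
Then there is `C = C(n, p₁,…,pₙ)` such that for all `v ∈ C_c^∞(ℝⁿ)`:
`(∫ |v|^{p*})^{1/p*} ≤ C (∑ᵢ ∫ |∂v/∂xᵢ|^{pᵢ})^{1/p}`. -/
theorem stmt11 (n : ℕ) (hn : 2 ≤ n) (p : Fin n → ℝ) (hp : ∀ i, 1 ≤ p i)
    (hsum : 1 < ∑ i, 1 / p i) :
    ∃ C : ℝ, 0 < C ∧
      ∀ v : EuclideanSpace ℝ (Fin n) → ℝ,
        ContDiff ℝ (⊤ : ℕ∞) v → HasCompactSupport v →
        (∫ x, |v x| ^ pstar n p) ^ (1 / pstar n p) ≤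
          C * (∑ i, ∫ x, |fderiv ℝ v x (EuclideanSpace.single i 1)| ^ p i) ^
            (1 / pbar n p) := by
  have hP : 0 < pstar n p := pstar_pos (by omega) hsum
  have hpbar : 0 ≤ 1 / pbar n p := by
    rw [one_div_pbar]; exact div_nonneg (by linarith) (Nat.cast_nonneg n)
  have hC := anisoSobolevConst_pos (by omega) hp hsum
  refine ⟨anisoSobolevConst n p, hC, fun v hv h2v => ?_⟩
  have hv1 : ContDiff ℝ 1 v := hv.of_le (by exact_mod_cast le_top)
  have hX := ofReal_integral_abs_rpow (μ := volume) hv.continuous h2v hP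
  have hA i := ofReal_integral_abs_rpow (μ := volume)
    ((hv1.continuous_fderiv one_ne_zero).clm_apply continuous_const)
    (h2v.fderiv_apply ℝ (EuclideanSpace.single i 1)) (by linarith [hp i] : 0 < p i)
  have key := lintegral_rpow_pstar_le_euclidean hn hp hsum hv1 h2v
  have hint i : 0 ≤ ∫ x, |fderiv ℝ v x (EuclideanSpace.single i 1)| ^ p i :=
    integral_nonneg fun x => by positivity
  rw [← hX, ← sum_congr rfl fun i _ => hA i, ← ENNReal.ofReal_sum_of_nonneg
    fun i _ => hint i, ENNReal.ofReal_rpow_of_nonneg (integral_nonneg fun x => by positivity)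
    (by positivity), ENNReal.ofReal_rpow_of_nonneg (sum_nonneg fun i _ => hint i) hpbar,
    ← ENNReal.ofReal_mul hC.le] at key
  exact (ENNReal.ofReal_le_ofReal_iff (mul_nonneg hC.le
    (Real.rpow_nonneg (sum_nonneg fun i _ => hint i) _))).1 key
end
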